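/- Let σ and τ be the integer matrices σ = [[1,−1],[1,0]] and τ = [[1,−1],[0,−1]], both of which lie in GL₂(ℤ). The subgroup of GL₂(ℤ) generated by {σ, τ} is isomorphic to the dihedral group of order 12. -/

import Mathlib

/-!
`σ` has order 6, `τ` is an involution with `τ σ τ = σ⁻¹`, and `det τ = -1` keeps `τ` out of the
determinant-one group `⟨σ⟩`. The dihedral relations therefore define a homomorphism
`DihedralGroup 6 → GL₂(ℤ)`, `r i ↦ σ ^ i`, `sr i ↦ τ σ ^ i`; its image is `⟨σ, τ⟩`, and it is
injective because the only relations it could add, `σ ^ i = 1` or `τ = σ ^ (-i)`, are excluded.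
-/

section

variable {G : Type*} [Group G] {n : ℕ} {a b : G}

lemma zpow_eq_zpow_of_intCast_eq (ha : a ^ n = 1) {k l : ℤ} (h : (k : ZMod n) = l) :
    a ^ k = a ^ l :=
  zpow_eq_zpow_iff_modEq.2 (((ZMod.intCast_eq_intCast_iff _ _ _).1 h).of_dvd
    (Int.natCast_dvd_natCast.2 (orderOf_dvd_of_pow_eq_one ha)))

lemma zpow_mul_eq_mul_zpow_neg (hb : b ^ 2 = 1) (hab : b * a * b = a⁻¹) (k : ℤ) :
    a ^ k * b = b * a ^ (-k) := by
  have hbinv : b⁻¹ = b := inv_eq_of_mul_eq_one_right (by rw [← sq, hb])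
  have hconj : b * a ^ k * b⁻¹ = a ^ (-k) := by
    rw [← conj_zpow, hbinv, hab, inv_zpow, zpow_neg]
  rw [← hconj, hbinv, ← mul_assoc, ← mul_assoc, ← sq, hb, one_mul]

end

namespace DihedralGroup

variable {G : Type*} [Group G] {n : ℕ} {a b : G}

-- `ZMod.cast : ZMod n → ℤ` picks a representative for every `n`, including `n = 0`.
def lift (ha : a ^ n = 1) (hb : b ^ 2 = 1) (hab : b * a * b = a⁻¹) : DihedralGroup n →* G where
  toFun
    | r i => a ^ (i.cast : ℤ)
    | sr i => b * a ^ (i.cast : ℤ)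
  map_one' := by
    show a ^ ((0 : ZMod n).cast : ℤ) = 1
    rw [ZMod.cast_zero, zpow_zero]
  map_mul' := by
    have hpow {k l : ℤ} (h : (k : ZMod n) = l) : a ^ k = a ^ l := zpow_eq_zpow_of_intCast_eq ha h
    rintro (i | i) (j | j)
    · simp only [r_mul_r]
      rw [← zpow_add]
      exact hpow (by push_cast [ZMod.intCast_zmod_cast]; ring)
    · simp only [r_mul_sr]
      rw [← mul_assoc, zpow_mul_eq_mul_zpow_neg hb hab, mul_assoc, ← zpow_add]
      exact congrArg (b * ·) (hpow (by push_cast [ZMod.intCast_zmod_cast]; ring))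
    · simp only [sr_mul_r]
      rw [mul_assoc, ← zpow_add]
      exact congrArg (b * ·) (hpow (by push_cast [ZMod.intCast_zmod_cast]; ring))
    · simp only [sr_mul_sr]
      rw [mul_assoc, ← mul_assoc (a ^ _), zpow_mul_eq_mul_zpow_neg hb hab, ← mul_assoc, ← mul_assoc,
        ← sq, hb, one_mul, ← zpow_add]
      exact hpow (by push_cast [ZMod.intCast_zmod_cast]; ring)

@[simp] lemma lift_r (ha : a ^ n = 1) (hb : b ^ 2 = 1) (hab : b * a * b = a⁻¹) (i : ZMod n) :
    lift ha hb hab (r i) = a ^ (i.cast : ℤ) := rfl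

@[simp] lemma lift_sr (ha : a ^ n = 1) (hb : b ^ 2 = 1) (hab : b * a * b = a⁻¹) (i : ZMod n) :
    lift ha hb hab (sr i) = b * a ^ (i.cast : ℤ) := rfl

lemma lift_r_one (ha : a ^ n = 1) (hb : b ^ 2 = 1) (hab : b * a * b = a⁻¹) :
    lift ha hb hab (r 1) = a := by
  refine (zpow_eq_zpow_of_intCast_eq ha ?_).trans (zpow_one a)
  rw [ZMod.intCast_zmod_cast, Int.cast_one]

lemma range_lift (ha : a ^ n = 1) (hb : b ^ 2 = 1) (hab : b * a * b = a⁻¹) :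
    (lift ha hb hab).range = Subgroup.closure {a, b} := by
  have haS : a ∈ Subgroup.closure {a, b} := Subgroup.subset_closure (by simp)
  have hbS : b ∈ Subgroup.closure {a, b} := Subgroup.subset_closure (by simp)
  apply le_antisymm
  · rintro _ ⟨i | i, rfl⟩
    · exact Subgroup.zpow_mem _ haS _
    · exact Subgroup.mul_mem _ hbS (Subgroup.zpow_mem _ haS _)
  · rw [Subgroup.closure_le]
    rintro x (rfl | rfl)
    · exact ⟨r 1, lift_r_one ha hb hab⟩
    · exact ⟨sr 0, by simp⟩

lemma lift_injective (ha : orderOf a = n) (hb : b ^ 2 = 1) (hab : b * a * b = a⁻¹)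
    (hba : b ∉ Subgroup.zpowers a) :
    Function.Injective (lift (ha ▸ pow_orderOf_eq_one a) hb hab) := by
  rw [injective_iff_map_eq_one]
  rintro (i | i) h
  · rw [lift_r, ← orderOf_dvd_iff_zpow_eq_one, ha, ← ZMod.intCast_zmod_eq_zero_iff_dvd,
      ZMod.intCast_zmod_cast] at h
    rw [h, r_zero]
  · rw [lift_sr, mul_eq_one_iff_eq_inv, ← zpow_neg] at h
    exact absurd (h ▸ Subgroup.zpow_mem_zpowers a _) hba

noncomputable def closureMulEquiv (ha : orderOf a = n) (hb : b ^ 2 = 1) (hab : b * a * b = a⁻¹)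
    (hba : b ∉ Subgroup.zpowers a) : Subgroup.closure {a, b} ≃* DihedralGroup n :=
  (MulEquiv.subgroupCongr (range_lift _ hb hab).symm).trans
    (MonoidHom.ofInjective (lift_injective ha hb hab hba)).symm

end DihedralGroup

/-- The subgroup of GL₂(ℤ) generated by σ = [[1,−1],[1,0]] and τ = [[1,−1],[0,−1]]
is isomorphic to the dihedral group of order 12. -/
theorem stmt_1 (σ τ : GL (Fin 2) ℤ)
    (hσ : (σ : Matrix (Fin 2) (Fin 2) ℤ) = !![1, -1; 1, 0])
    (hτ : (τ : Matrix (Fin 2) (Fin 2) ℤ) = !![1, -1; 0, -1]) :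
    Nonempty ((Subgroup.closure {σ, τ} : Subgroup (GL (Fin 2) ℤ)) ≃* DihedralGroup 6) := by
  have hσ6 : orderOf σ = 6 := by
    rw [orderOf_eq_iff (by norm_num)]
    simp only [ne_eq, Units.ext_iff, Units.val_pow_eq_pow_val, hσ, Units.val_one]
    decide
  have hτ2 : τ ^ 2 = 1 := by
    rw [Units.ext_iff, Units.val_pow_eq_pow_val, hτ, Units.val_one]
    decide
  have hτστ : τ * σ * τ = σ⁻¹ := by
    refine eq_inv_of_mul_eq_one_left ?_
    rw [Units.ext_iff]
    simp only [Units.val_mul, hσ, hτ, Units.val_one]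
    decide
  have hτσ : τ ∉ Subgroup.zpowers σ := by
    have hdet : σ ∈ Matrix.GeneralLinearGroup.det.ker ∧ τ ∉ Matrix.GeneralLinearGroup.det.ker := by
      simp [MonoidHom.mem_ker, Units.ext_iff, hσ, hτ, Matrix.det_fin_two_of]
    exact fun hmem ↦ hdet.2 (Subgroup.zpowers_le.2 hdet.1 hmem)
  exact ⟨DihedralGroup.closureMulEquiv hσ6 hτ2 hτστ hτσ⟩
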